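/- arXiv:2603.10309 — 7 statements merged into one kernel-verified Lean document; each statement's English description precedes it below -/
import Mathlib

section
/- Let f : {0,1}^n → ℝ satisfy f(v_I) ≠ 0 for every I ⊆ [n] with |I| ≤ t. Then the functions {x_I · f : |I| ≤ t} are linearly independent in the space of real-valued functions on {0,1}^n. -/
/-- The monomial function `x_I` on the Boolean cube (identified with subsets of `[n]`
via characteristic vectors): `x_I(v_J) = ∏_{i∈I} (v_J)_i`. -/
def xI {n : ℕ} (I : Finset (Fin n)) : Finset (Fin n) → ℝ :=
  fun J => ∏ i ∈ I, (if i ∈ J then (1 : ℝ) else 0)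

/- The evaluation matrix `(v i (e j))` is triangular with nonzero diagonal, so a vanishing
combination is killed by well-founded induction: evaluate at `e i` once all coefficients
below `i` are known to vanish. -/
theorem linearIndependent_of_eval_triangular {ι α R : Type*} [PartialOrder ι] [WellFoundedLT ι]
    [Ring R] [NoZeroDivisors R] (v : ι → α → R) (e : ι → α)
    (hv : ∀ i j, ¬ i ≤ j → v i (e j) = 0) (hdiag : ∀ i, v i (e i) ≠ 0) :
    LinearIndependent R v := by
  rw [linearIndependent_iff']
  intro s g hsum i
  induction i using WellFoundedLT.induction with
  | _ i ih =>
    intro hi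
    have hsum_at : ∑ j ∈ s, g j * v j (e i) = 0 := by
      simpa using congrFun hsum (e i)
    rw [Finset.sum_eq_single i _ (absurd hi)] at hsum_at
    · exact (mul_eq_zero.mp hsum_at).resolve_right (hdiag i)
    · intro j hj hji
      by_cases hle : j ≤ i
      · rw [ih j (lt_of_le_of_ne hle hji) hj, zero_mul]
      · rw [hv j i hle, mul_zero]

theorem xI_apply {n : ℕ} (I J : Finset (Fin n)) : xI I J = if I ⊆ J then 1 else 0 := by
  unfold xI
  split_ifs with h
  · exact Finset.prod_eq_one fun i hi => if_pos (h hi)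
  · obtain ⟨i, hi, hiJ⟩ := Finset.not_subset.mp h
    exact Finset.prod_eq_zero hi (if_neg hiJ)

/-- Alon–Babai–Suzuki independence lemma: if `f` is nonzero on all characteristic
vectors of sets of size at most `t`, then the functions `x_I · f` for `|I| ≤ t`
are linearly independent. -/
theorem stmt1 (n t : ℕ) (f : Finset (Fin n) → ℝ)
    (hf : ∀ I : Finset (Fin n), I.card ≤ t → f I ≠ 0) :
    LinearIndependent ℝ
      (fun I : {I : Finset (Fin n) // I.card ≤ t} =>
        (fun J => xI I.1 J * f J : Finset (Fin n) → ℝ)) := by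
  refine linearIndependent_of_eval_triangular _ Subtype.val (fun I J hIJ => ?_) fun I => ?_
  · rw [xI_apply, if_neg (show ¬ I.1 ⊆ J.1 from hIJ), zero_mul]
  · rw [xI_apply, if_pos subset_rfl, one_mul]
    exact hf I.1 I.2
end

section
/- Let ℱ = {A_1,…,A_m} be an L-intersecting family of subsets of [n] ordered so that |A_1| ≤ ⋯ ≤ |A_m|, where L ⊆ ℤ_{≥0}. Define f_i(x) = ∏_{ℓ∈L, ℓ<|A_i|} (v_{A_i}·x − ℓ). Then f_i evaluated at the characteristic vector of A_i is nonzero, and f_i evaluated at the characteristic vector of A_j is zero for all j < i. Consequently f_1,…,f_m are linearly independent. -/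
/-!
Evaluated at the characteristic vector of `A_j`, the linear form `v_{A_i}·x` equals `|A_i ∩ A_j|`.
For `j = i` this is `|A_i|`, which exceeds every root `ℓ < |A_i|` of `f_i`. For `j < i` the sets
are distinct with `|A_j| ≤ |A_i|`, so `|A_i ∩ A_j| < |A_i|`, and it lies in `L`: it is itself a root
of `f_i`. Hence the evaluation matrix `(f_i(A_j))` is triangular with nonzero diagonal, which forces
linear independence.
-/

open Finset

theorem Finset.card_inter_lt_card_left {α : Type*} [DecidableEq α] {s t : Finset α}
    (hst : s ≠ t) (hcard : #t ≤ #s) : #(s ∩ t) < #s := by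
  refine card_lt_card (ssubset_iff_subset_ne.2 ⟨inter_subset_left, fun h => hst ?_⟩)
  exact eq_of_subset_of_card_le (inter_eq_left.1 h) hcard

theorem linearIndependent_of_eval_triangular_s4 {ι α K : Type*} [Fintype ι] [LinearOrder ι]
    [Field K] (f : ι → α → K) (a : ι → α) (hdiag : ∀ i, f i (a i) ≠ 0)
    (hlower : ∀ i j, j < i → f i (a j) = 0) : LinearIndependent K f := by
  let M : Matrix ι ι K := Matrix.of fun i j => f i (a j)
  have htri : M.IsUpperTriangular := fun i j hji => hlower i j hji
  have hM : IsUnit M := by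
    rw [Matrix.isUnit_iff_isUnit_det, Matrix.det_of_isUpperTriangular htri]
    exact isUnit_iff_ne_zero.2 (prod_ne_zero_iff.2 fun i _ => hdiag i)
  exact LinearIndependent.of_comp (LinearMap.funLeft K K a)
    (Matrix.linearIndependent_rows_iff_isUnit.2 hM)

section RootProduct

variable {R : Type*} [CommRing R] (L : Finset ℕ)

theorem prod_filter_lt_natCast_sub_ne_zero [IsDomain R] [CharZero R] (k : ℕ) :
    ∏ ℓ ∈ L.filter (· < k), ((k : R) - ℓ) ≠ 0 := by
  refine prod_ne_zero_iff.2 fun ℓ hℓ => sub_ne_zero.2 ?_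
  exact_mod_cast (mem_filter.1 hℓ).2.ne'

theorem prod_filter_lt_natCast_sub_eq_zero {t k : ℕ} (ht : t ∈ L) (htk : t < k) :
    ∏ ℓ ∈ L.filter (· < k), ((t : R) - ℓ) = 0 :=
  prod_eq_zero (mem_filter.2 ⟨ht, htk⟩) (sub_self _)

end RootProduct

/-- The triangular property of the ABS polynomials `f_i` associated to an
`L`-intersecting family `A_1, …, A_m` ordered by size, and their linear independence. -/
theorem stmt4 (n m : ℕ) (L : Finset ℕ) (A : Fin m → Finset (Fin n))
    (hinj : Function.Injective A)
    (hmono : ∀ i j : Fin m, i ≤ j → (A i).card ≤ (A j).card)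
    (hint : ∀ i j : Fin m, i ≠ j → (A i ∩ A j).card ∈ L) :
    let fi : Fin m → Finset (Fin n) → ℝ := fun i X =>
      ∏ ℓ ∈ L.filter (fun ℓ => ℓ < (A i).card),
        ((∑ j ∈ A i, (if j ∈ X then (1 : ℝ) else 0)) - ℓ)
    (∀ i, fi i (A i) ≠ 0) ∧ (∀ i j : Fin m, j < i → fi i (A j) = 0) ∧
      LinearIndependent ℝ fi := by
  intro fi
  have hfi : ∀ i X, fi i X = ∏ ℓ ∈ L.filter (· < #(A i)), ((#(A i ∩ X) : ℝ) - ℓ) := by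
    intro i X
    simp only [fi, sum_boole, filter_mem_eq_inter]
  have hdiag : ∀ i, fi i (A i) ≠ 0 := fun i => by
    rw [hfi, inter_self]
    exact prod_filter_lt_natCast_sub_ne_zero L _
  have hlower : ∀ i j, j < i → fi i (A j) = 0 := fun i j hji => by
    rw [hfi]
    exact prod_filter_lt_natCast_sub_eq_zero L (hint i j hji.ne')
      (card_inter_lt_card_left (hinj.ne hji.ne') (hmono j i hji.le))
  exact ⟨hdiag, hlower, linearIndependent_of_eval_triangular_s4 fi A hdiag hlower⟩
end

section
/- Let K = {k_1,…,k_r} and L be a set of s nonnegative integers with k_i > s − r for every i. If ℱ ⊆ ⋃_{k∈K} C([n],k) is L-intersecting, then |ℱ| + Σ_{j=s−r+1}^{s} |𝒩_j(ℱ)| ≤ Σ_{i=s−r+1}^{s} C(n,i), where 𝒩_j(ℱ) is the set of j-subsets of [n] not contained in any member of ℱ. -/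
/-- The `j`-non-shadow of a family `ℱ`: the `j`-subsets of `[n]` contained in no
member of `ℱ`. -/
def nonShadow (n j : ℕ) (ℱ : Finset (Finset (Fin n))) : Finset (Finset (Fin n)) :=
  (Finset.powersetCard j (Finset.univ : Finset (Fin n))).filter
    (fun T => ∀ F ∈ ℱ, ¬ T ⊆ F)

/-!
Polynomial method. A function on subsets of `α` is a multilinear polynomial evaluated at
characteristic vectors, and those of degree at most `s` form a space of dimension at most
`∑_{i ≤ s} C(|α|, i)`. It contains the functions `S ↦ ∏_{l ∈ L, l < |A|} (|A ∩ S| - l)` for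
`A ∈ ℱ`, `x^T · ∏_{k ∈ K} (|S| - k)` for `|T| ≤ s - r`, and the monomials `x^T` for `T` in the
non-shadows. Evaluated at the sets indexing them they form a triangular system (members of `ℱ`
first, each part ordered by size): the product over `K` vanishes on `ℱ`, `x^T` vanishes at `F`
when `T ⊄ F`, and for `B ∈ ℱ` with `B ⊄ A` the factor `l = |B ∩ A| ∈ L` vanishes at `A`. So
they are linearly independent, and the sets of size at most `s - r` cancel from both sides of
the count.
-/

open Finset

theorem LinearIndependent.of_eval_triangular {ι X R : Type*} [CommRing R] [NoZeroDivisors R]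
    (v : ι → X → R) (p : ι → X) (rank : ι → ℕ) (hdiag : ∀ i, v i (p i) ≠ 0)
    (htri : ∀ i j, j ≠ i → v j (p i) ≠ 0 → rank j < rank i) : LinearIndependent R v := by
  rw [linearIndependent_iff']
  intro t g hg i
  induction h : rank i using Nat.strong_induction_on generalizing i with
  | _ m ih =>
    intro hi
    have heval := congrFun hg (p i)
    simp only [Finset.sum_apply, Pi.smul_apply, smul_eq_mul, Pi.zero_apply] at heval
    rw [Finset.sum_eq_single_of_mem i hi] at heval
    · exact (mul_eq_zero.1 heval).resolve_right (hdiag i)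
    · intro j hj hji
      by_cases hv : v j (p i) = 0
      · rw [hv, mul_zero]
      · rw [ih _ (h ▸ htri i j hji hv) j rfl hj, zero_mul]

lemma Finset.card_biUnion_of_subset_powersetCard {α : Type*} [DecidableEq α] {u : Finset α}
    {J : Finset ℕ} {G : ℕ → Finset (Finset α)} (hG : ∀ j ∈ J, G j ⊆ powersetCard j u) :
    #(J.biUnion G) = ∑ j ∈ J, #(G j) :=
  card_biUnion fun i hi j hj hij => disjoint_left.2 fun _ hTi hTj =>
    hij ((mem_powersetCard.1 (hG i hi hTi)).2.symm.trans (mem_powersetCard.1 (hG j hj hTj)).2)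

namespace AlonBabaiSuzuki

variable {α : Type*} [DecidableEq α]

/-- The multilinear monomial `x^T` evaluated at the characteristic vector of `S`. -/
def monomial (T : Finset α) : Finset α → ℚ := fun S => if T ⊆ S then 1 else 0

variable (α) in
def degLE (a : ℕ) : Submodule ℚ (Finset α → ℚ) :=
  Submodule.span ℚ (Set.range fun T : {T : Finset α // #T ≤ a} => monomial T.1)

lemma monomial_mul (T T' : Finset α) : monomial T * monomial T' = monomial (T ∪ T') := by
  funext S
  simp only [Pi.mul_apply, monomial, union_subset_iff]
  split_ifs <;> simp_all

lemma monomial_empty : monomial (∅ : Finset α) = 1 := by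
  funext S; simp [monomial]

lemma monomial_apply_eq_zero {T S : Finset α} (h : ¬ T ⊆ S) : monomial T S = 0 := if_neg h

lemma monomial_mem_degLE {T : Finset α} {a : ℕ} (h : #T ≤ a) : monomial T ∈ degLE α a :=
  Submodule.subset_span ⟨⟨T, h⟩, rfl⟩

lemma degLE_mono : Monotone (degLE α) := fun _ _ hab =>
  Submodule.span_mono <| Set.range_subset_iff.2 fun T => ⟨⟨T.1, T.2.trans hab⟩, rfl⟩

lemma degLE_mul_le (a b : ℕ) : degLE α a * degLE α b ≤ degLE α (a + b) := by
  rw [degLE, degLE, Submodule.span_mul_span, Submodule.span_le]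
  rintro _ ⟨_, ⟨T, rfl⟩, _, ⟨T', rfl⟩, rfl⟩
  change monomial _ * monomial _ ∈ _
  rw [monomial_mul]
  exact monomial_mem_degLE ((card_union_le _ _).trans (Nat.add_le_add T.2 T'.2))

lemma mul_mem_degLE {a b : ℕ} {f g : Finset α → ℚ} (hf : f ∈ degLE α a) (hg : g ∈ degLE α b) :
    f * g ∈ degLE α (a + b) :=
  degLE_mul_le a b (Submodule.mul_mem_mul hf hg)

lemma prod_mem_degLE {ι : Type*} (t : Finset ι) {f : ι → Finset α → ℚ}
    (hf : ∀ i ∈ t, f i ∈ degLE α 1) : ∏ i ∈ t, f i ∈ degLE α #t := by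
  induction t using Finset.cons_induction with
  | empty => simpa [← monomial_empty] using monomial_mem_degLE (α := α) (T := ∅) le_rfl
  | cons i t hi ih =>
    rw [prod_cons, card_cons, add_comm]
    exact mul_mem_degLE (hf i (mem_cons_self i t)) (ih fun j hj => hf j (mem_cons_of_mem hj))

def cardInterSub (A : Finset α) (c : ℚ) : Finset α → ℚ := fun S => #(A ∩ S) - c

lemma cardInterSub_mem_degLE (A : Finset α) (c : ℚ) : cardInterSub A c ∈ degLE α 1 := by
  have h : cardInterSub A c = ∑ i ∈ A, monomial {i} - c • monomial ∅ := by
    funext S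
    simp only [cardInterSub, Pi.sub_apply, Finset.sum_apply, Pi.smul_apply, smul_eq_mul,
      monomial, singleton_subset_iff, empty_subset, if_true, mul_one, sum_boole,
      filter_mem_eq_inter]
  rw [h]
  exact sub_mem (Submodule.sum_mem _ fun i _ => monomial_mem_degLE (by simp))
    (Submodule.smul_mem _ _ (monomial_mem_degLE (by simp)))

def absPoly (L : Finset ℕ) (A : Finset α) : Finset α → ℚ :=
  ∏ l ∈ L with l < #A, cardInterSub A l

lemma absPoly_mem_degLE {L : Finset ℕ} {s : ℕ} (hL : #L ≤ s) (A : Finset α) :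
    absPoly L A ∈ degLE α s :=
  degLE_mono ((card_filter_le _ _).trans hL)
    (prod_mem_degLE _ fun l _ => cardInterSub_mem_degLE A l)

lemma absPoly_self_ne_zero (L : Finset ℕ) (A : Finset α) : absPoly L A A ≠ 0 := by
  simp only [absPoly, prod_apply, cardInterSub, inter_self]
  refine prod_ne_zero_iff.2 fun l hl => sub_ne_zero.2 ?_
  exact_mod_cast (mem_filter.1 hl).2.ne'

lemma absPoly_apply_eq_zero {L : Finset ℕ} {A S : Finset α} (hL : #(A ∩ S) ∈ L)
    (hAS : ¬ A ⊆ S) : absPoly L A S = 0 := by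
  simp only [absPoly, prod_apply, cardInterSub]
  refine prod_eq_zero (mem_filter.2 ⟨hL, card_lt_card ?_⟩) (sub_self _)
  exact inter_subset_left.ssubset_of_ne fun h => hAS (inter_eq_left.1 h)

variable [Fintype α]

def cardPoly (K : Finset ℕ) : Finset α → ℚ := ∏ k ∈ K, cardInterSub univ k

lemma cardPoly_mem_degLE (K : Finset ℕ) : cardPoly K ∈ degLE α #K :=
  prod_mem_degLE _ fun k _ => cardInterSub_mem_degLE univ k

lemma cardPoly_apply_eq_zero_iff {K : Finset ℕ} {S : Finset α} : cardPoly K S = 0 ↔ #S ∈ K := by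
  simp [cardPoly, prod_apply, cardInterSub, prod_eq_zero_iff, sub_eq_zero]

lemma finrank_degLE_le (a : ℕ) : Module.finrank ℚ (degLE α a) ≤ #{T : Finset α | #T ≤ a} :=
  (finrank_range_le_card _).trans (Fintype.card_subtype _).le


lemma card_le_of_linearIndependent {ι : Type*} [Fintype ι] {v : ι → Finset α → ℚ} {s : ℕ}
    (hv : LinearIndependent ℚ v) (hmem : ∀ i, v i ∈ degLE α s) :
    Fintype.card ι ≤ #{T : Finset α | #T ≤ s} :=
  calc Fintype.card ι = (Set.range v).finrank ℚ := linearIndependent_iff_card_eq_finrank_span.1 hv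
    _ ≤ Module.finrank ℚ (degLE α s) :=
      Submodule.finrank_mono (Submodule.span_le.2 (Set.range_subset_iff.2 hmem))
    _ ≤ _ := finrank_degLE_le s

def absFamily (K L : Finset ℕ) (d : ℕ) (ℱ Q : Finset (Finset α)) : ℱ ⊕ Q → Finset α → ℚ :=
  Sum.elim (fun A => absPoly L A.1) fun T => monomial T.1 * if #T.1 ≤ d then cardPoly K else 1

lemma absFamily_mem_degLE {K L : Finset ℕ} {d s : ℕ} (hL : #L ≤ s) (hK : d + #K ≤ s)
    {ℱ Q : Finset (Finset α)} (hQ : ∀ T ∈ Q, #T ≤ s) (i : ℱ ⊕ Q) :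
    absFamily K L d ℱ Q i ∈ degLE α s := by
  rcases i with A | ⟨T, hT⟩
  · exact absPoly_mem_degLE hL A.1
  · by_cases hTd : #T ≤ d
    · simpa [absFamily, hTd] using
        degLE_mono hK (mul_mem_degLE (monomial_mem_degLE hTd) (cardPoly_mem_degLE K))
    · simpa [absFamily, hTd] using monomial_mem_degLE (hQ T hT)

lemma linearIndependent_absFamily {K L : Finset ℕ} {d : ℕ} (hgap : ∀ k ∈ K, d < k)
    {ℱ Q : Finset (Finset α)} (hℱK : ∀ F ∈ ℱ, #F ∈ K)
    (hint : ∀ A ∈ ℱ, ∀ B ∈ ℱ, A ≠ B → #(A ∩ B) ∈ L)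
    (hQ : ∀ T ∈ Q, d < #T → ∀ F ∈ ℱ, ¬ T ⊆ F) :
    LinearIndependent ℚ (absFamily K L d ℱ Q) := by
  refine .of_eval_triangular _ (Sum.elim Subtype.val Subtype.val)
    (Sum.elim (fun A => #A.1) fun T => Fintype.card α + 1 + #T.1) ?_ ?_
  · rintro (A | T)
    · exact absPoly_self_ne_zero L A.1
    · by_cases hTd : #T.1 ≤ d
      · simpa [absFamily, monomial, hTd, cardPoly_apply_eq_zero_iff] using
          fun hTK => (hgap _ hTK).not_ge hTd
      · simp [absFamily, monomial, hTd]
  rintro (A | T) (B | T') hne hv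
  · have hBA : B.1 ≠ A.1 := Subtype.coe_ne_coe.2 (by simpa using hne)
    have hBA_sub : B.1 ⊆ A.1 := by
      by_contra hBA_sub
      exact hv (absPoly_apply_eq_zero (hint B.1 B.2 A.1 A.2 hBA) hBA_sub)
    exact card_lt_card (hBA_sub.ssubset_of_ne hBA)
  · refine absurd ?_ hv
    by_cases hT'd : #T'.1 ≤ d
    · simp [absFamily, hT'd, cardPoly_apply_eq_zero_iff.2 (hℱK A.1 A.2)]
    · simp only [absFamily, Sum.elim_inr, Pi.mul_apply, Sum.elim_inl,
        monomial_apply_eq_zero (hQ T'.1 T'.2 (not_le.1 hT'd) A.1 A.2), zero_mul]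
  · have := card_le_univ B.1
    simp only [Sum.elim_inl, Sum.elim_inr]
    omega
  · have hT'T : T'.1 ⊆ T.1 := by
      by_contra h
      simp only [absFamily, Sum.elim_inr, Pi.mul_apply, monomial_apply_eq_zero h, zero_mul] at hv
      exact hv rfl
    have := card_lt_card (hT'T.ssubset_of_ne (Subtype.coe_ne_coe.2 (by simpa using hne)))
    simp only [Sum.elim_inr]
    omega

theorem card_add_card_le_of_intersecting {K L : Finset ℕ} {d s : ℕ} (hL : #L ≤ s)
    (hK : d + #K ≤ s) (hgap : ∀ k ∈ K, d < k) {ℱ N : Finset (Finset α)}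
    (hℱK : ∀ F ∈ ℱ, #F ∈ K) (hint : ∀ A ∈ ℱ, ∀ B ∈ ℱ, A ≠ B → #(A ∩ B) ∈ L)
    (hN : ∀ T ∈ N, (d < #T ∧ #T ≤ s) ∧ ∀ F ∈ ℱ, ¬ T ⊆ F) :
    #ℱ + #N ≤ #{T : Finset α | d < #T ∧ #T ≤ s} := by
  set Q : Finset (Finset α) := ({T | #T ≤ d} : Finset (Finset α)) ∪ N
  have hQ_mem {T : Finset α} (hT : T ∈ Q) (hTd : d < #T) : T ∈ N :=
    (mem_union.1 hT).resolve_left fun h => (mem_filter.1 h).2.not_gt hTd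
  have hcard : #ℱ + #Q ≤ #{T : Finset α | #T ≤ s} := by
    simpa using card_le_of_linearIndependent
      (linearIndependent_absFamily hgap hℱK hint fun T hT hTd => (hN T (hQ_mem hT hTd)).2)
      (absFamily_mem_degLE hL hK fun T hT => by
        by_cases hTd : #T ≤ d
        · omega
        · exact (hN T (hQ_mem hT (not_le.1 hTd))).1.2)
  have hQ : #Q = #{T : Finset α | #T ≤ d} + #N :=
    card_union_of_disjoint (disjoint_left.2 fun T hTd hTN =>
      (hN T hTN).1.1.not_ge (mem_filter.1 hTd).2)
  have hlevels : #{T : Finset α | #T ≤ s} =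
      #{T : Finset α | #T ≤ d} + #{T : Finset α | d < #T ∧ #T ≤ s} := by
    rw [← card_filter_add_card_filter_not (s := {T : Finset α | #T ≤ s}) (#· ≤ d),
      filter_filter, filter_filter]
    congr 2 <;> ext T <;> simp only [mem_filter, mem_univ, true_and] <;> omega
  omega

end AlonBabaiSuzuki

theorem stmt6_general (n r s : ℕ) (hrs : r ≤ s)
    (K L : Finset ℕ) (hKcard : K.card = r) (hLcard : L.card = s)
    (hgap : ∀ k ∈ K, s - r < k)
    (ℱ : Finset (Finset (Fin n)))
    (hℱK : ∀ F ∈ ℱ, F.card ∈ K)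
    (hint : ∀ A ∈ ℱ, ∀ B ∈ ℱ, A ≠ B → (A ∩ B).card ∈ L) :
    ℱ.card + ∑ j ∈ Finset.Icc (s - r + 1) s, (nonShadow n j ℱ).card
      ≤ ∑ i ∈ Finset.Icc (s - r + 1) s, n.choose i := by
  have hN : #((Icc (s - r + 1) s).biUnion (nonShadow n · ℱ))
      = ∑ j ∈ Icc (s - r + 1) s, #(nonShadow n j ℱ) :=
    card_biUnion_of_subset_powersetCard fun j _ => filter_subset _ _
  have hlevels : #{T : Finset (Fin n) | s - r < #T ∧ #T ≤ s}
      = ∑ i ∈ Icc (s - r + 1) s, n.choose i := by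
    have hunion : ({T | s - r < #T ∧ #T ≤ s} : Finset (Finset (Fin n)))
        = (Icc (s - r + 1) s).biUnion (powersetCard · univ) := by
      ext T
      simp only [mem_filter, mem_univ, true_and, mem_biUnion, mem_Icc, mem_powersetCard,
        subset_univ, true_and, exists_eq_right']
      omega
    rw [hunion, card_biUnion_of_subset_powersetCard fun j _ => subset_rfl]
    simp only [card_powersetCard, card_univ, Fintype.card_fin]
  rw [← hN, ← hlevels]
  refine AlonBabaiSuzuki.card_add_card_le_of_intersecting hLcard.le (by omega) hgap hℱK hint
    fun T hT => ?_
  obtain ⟨j, hj, hT⟩ := mem_biUnion.1 hT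
  rw [nonShadow, mem_filter, mem_powersetCard] at hT
  rw [mem_Icc] at hj
  exact ⟨by omega, hT.2⟩

/-- Multilevel non-shadow ABS theorem:
`|ℱ| + Σ_{j=s−r+1}^{s} |𝒩_j(ℱ)| ≤ Σ_{i=s−r+1}^{s} C(n,i)`. -/
theorem stmt6 (n r s : ℕ) (hr : 1 ≤ r) (hrs : r ≤ s)
    (K L : Finset ℕ) (hKcard : K.card = r) (hLcard : L.card = s)
    (hgap : ∀ k ∈ K, s - r < k)
    (ℱ : Finset (Finset (Fin n)))
    (hℱK : ∀ F ∈ ℱ, F.card ∈ K)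
    (hint : ∀ A ∈ ℱ, ∀ B ∈ ℱ, A ≠ B → (A ∩ B).card ∈ L) :
    ℱ.card + ∑ j ∈ Finset.Icc (s - r + 1) s, (nonShadow n j ℱ).card
      ≤ ∑ i ∈ Finset.Icc (s - r + 1) s, n.choose i :=
  stmt6_general n r s hrs K L hKcard hLcard hgap ℱ hℱK hint
end

section
/- Let K = {k_1,…,k_r} and L be a set of s nonnegative integers with k_i > s − r for every i. If ℱ ⊆ ⋃_{k∈K} C([n],k) is L-intersecting, then |ℱ| ≤ Σ_{j=s−r+1}^{s} |∂_j ℱ|, where ∂_j ℱ denotes the j-shadow of ℱ. -/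
/-!
The Alon–Babai–Suzuki linear-algebra method, in the space of functions `ℱ → 𝕜`. Write
`E_T(S) = [T ⊆ S]`. For `T ⊆ F`, multiplying `E_T` by `|S ∩ F| - k` gives `(|T| - k) E_T`
plus a sum of `E_{T ∪ {i}}`; so a product of `m` such factors times `E_T` is `∏ (|T| - k) E_T`
modulo the span of the `E_{T'}` with `T ⊂ T' ⊆ F`, `|T'| ≤ |T| + m`.

Applied to `∏_{k ∈ K} (|S| - k)`, which vanishes on `ℱ`, this expresses every `E_T` with
`|T| ≤ s - r < min K` through `E_{T'}` with larger `T'`, `|T'| ≤ s`; by downward induction every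
`E_T` with `|T| ≤ s` lies in the span of the `E_T` with `T` in the shadow and `s - r < |T| ≤ s`.
The functions `f_F(S) = ∏_{l ∈ L, l < |F|} (|S ∩ F| - l)` are products of at most `s` factors,
so they lie in that span, and they are linearly independent since `f_F(G) = 0 ≠ f_F(F)` whenever
`F ≠ G` and `|G| ≤ |F|`.
-/

open Finset

/-- The `j`-shadow of a family `ℱ`: the `j`-subsets of `[n]` contained in some
member of `ℱ`. -/
def shadow' (n j : ℕ) (ℱ : Finset (Finset (Fin n))) : Finset (Finset (Fin n)) :=
  (Finset.powersetCard j (Finset.univ : Finset (Fin n))).filter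
    (fun T => ∃ F ∈ ℱ, T ⊆ F)

namespace LIntersecting

theorem linearIndependent_of_eval_triangular {ι R β : Type*} [Fintype ι] [Ring R]
    [NoZeroDivisors R] [LinearOrder β] (v : ι → ι → R) (rank : ι → β)
    (hdiag : ∀ i, v i i ≠ 0) (hlow : ∀ i j, i ≠ j → rank j ≤ rank i → v i j = 0) :
    LinearIndependent R v := by
  classical
  rw [Fintype.linearIndependent_iff]
  intro c hc
  by_contra! hne
  obtain ⟨i, hi, hmin⟩ :=
    exists_min_image {i | c i ≠ 0} rank (filter_nonempty_iff.mpr (by simpa))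
  have hi : c i ≠ 0 := by simpa using hi
  have hci : c i * v i i = 0 := by
    have h := congrFun hc i
    rw [Finset.sum_apply, sum_eq_single i (fun j _ hji => ?_) (by simp)] at h
    · simpa using h
    by_cases hcj : c j = 0
    · simp [hcj]
    · simp [hlow j i hji (hmin j (by simpa using hcj))]
  exact (mul_eq_zero.mp hci).elim hi (hdiag i)

section Expansion

variable {α R : Type*} [DecidableEq α] [CommRing R] (ℱ : Finset (Finset α))

def subsetInd (T : Finset α) : ℱ → R := fun S => if T ⊆ S.1 then 1 else 0

def interCardSub (F : Finset α) (k : ℕ) : ℱ → R := fun S => ((S.1 ∩ F).card : R) - k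

def upperSpan (F T : Finset α) (d : ℕ) : Submodule R (ℱ → R) :=
  Submodule.span R (subsetInd ℱ '' {T' | T ⊂ T' ∧ T' ⊆ F ∧ T'.card ≤ d})

def shadowSpan (a b : ℕ) : Submodule R (ℱ → R) :=
  Submodule.span R
    (subsetInd ℱ '' {T | (∃ F ∈ ℱ, T ⊆ F) ∧ a ≤ T.card ∧ T.card ≤ b})

def intersectionPoly (L : Finset ℕ) (F : Finset α) : ℱ → R :=
  ∏ l ∈ L.filter (· < F.card), interCardSub ℱ F l

theorem subsetInd_empty : subsetInd ℱ ∅ = (1 : ℱ → R) :=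
  funext fun S => if_pos (empty_subset S.1)

theorem subsetInd_eq_zero {T : Finset α} (hT : ¬∃ F ∈ ℱ, T ⊆ F) :
    subsetInd ℱ T = (0 : ℱ → R) :=
  funext fun S => if_neg fun h => hT ⟨S, S.2, h⟩

theorem subsetInd_mem_upperSpan {F T T' : Finset α} {d : ℕ} (hTT' : T ⊂ T') (hT'F : T' ⊆ F)
    (hT' : T'.card ≤ d) : subsetInd ℱ T' ∈ upperSpan (R := R) ℱ F T d :=
  Submodule.subset_span ⟨T', ⟨hTT', hT'F, hT'⟩, rfl⟩

theorem intersectionPoly_apply (L : Finset ℕ) (F : Finset α) (S : ℱ) :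
    intersectionPoly (R := R) ℱ L F S
      = ∏ l ∈ L.filter (· < F.card), (((S.1 ∩ F).card : R) - l) := by
  simp [intersectionPoly, interCardSub]

theorem interCardSub_mul_subsetInd {F T : Finset α} (hTF : T ⊆ F) (k : ℕ) :
    interCardSub (R := R) ℱ F k * subsetInd ℱ T
      = ((T.card : R) - k) • subsetInd ℱ T + ∑ i ∈ F \ T, subsetInd ℱ (insert i T) := by
  funext S
  simp only [Pi.mul_apply, Pi.add_apply, Pi.smul_apply, Finset.sum_apply, smul_eq_mul,
    interCardSub, subsetInd]
  by_cases hTS : T ⊆ S.1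
  · have hins : ∀ i ∈ F \ T, (if insert i T ⊆ S.1 then (1 : R) else 0)
        = if i ∈ S.1 then 1 else 0 := by
      simp [insert_subset_iff, hTS]
    have hfilter : (F \ T).filter (· ∈ S.1) = (S.1 ∩ F) \ T := by
      ext; simp only [mem_filter, mem_sdiff, mem_inter]; tauto
    have hcard : ((S.1 ∩ F).card : R) = T.card + ((F \ T).filter (· ∈ S.1)).card := by
      rw [hfilter, card_sdiff_of_subset (subset_inter hTS hTF),
        Nat.cast_sub (card_le_card (subset_inter hTS hTF))]
      ring
    rw [sum_congr rfl hins, sum_boole, if_pos hTS, hcard]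
    ring
  · have hins : ∀ i ∈ F \ T, (if insert i T ⊆ S.1 then (1 : R) else 0) = 0 :=
      fun i _ => if_neg fun h => hTS ((subset_insert i T).trans h)
    simp [hTS, sum_congr rfl hins]

theorem interCardSub_mul_mem_upperSpan {F T : Finset α} {d : ℕ} (k : ℕ) {f : ℱ → R}
    (hf : f ∈ upperSpan ℱ F T d) : interCardSub ℱ F k * f ∈ upperSpan ℱ F T (d + 1) := by
  suffices upperSpan ℱ F T d
      ≤ (upperSpan ℱ F T (d + 1)).comap (LinearMap.mulLeft R (interCardSub ℱ F k)) from
    this hf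
  refine Submodule.span_le.mpr ?_
  rintro _ ⟨T', ⟨hTT', hT'F, hT'd⟩, rfl⟩
  simp only [SetLike.mem_coe, Submodule.mem_comap, LinearMap.mulLeft_apply]
  rw [interCardSub_mul_subsetInd ℱ hT'F]
  refine add_mem (Submodule.smul_mem _ _ (subsetInd_mem_upperSpan ℱ hTT' hT'F (by omega)))
    (sum_mem fun i hi => ?_)
  rw [mem_sdiff] at hi
  exact subsetInd_mem_upperSpan ℱ (hTT'.trans_subset (subset_insert _ _))
    (insert_subset hi.1 hT'F)
    (by rw [card_insert_of_notMem hi.2]; omega)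

theorem prod_interCardSub_mul_subsetInd_sub_mem_upperSpan {F T : Finset α} (hTF : T ⊆ F)
    (m : Finset ℕ) :
    (∏ k ∈ m, interCardSub (R := R) ℱ F k) * subsetInd ℱ T
        - (∏ k ∈ m, ((T.card : R) - k)) • subsetInd ℱ T
      ∈ upperSpan ℱ F T (T.card + m.card) := by
  induction m using Finset.induction_on with
  | empty => simp
  | insert k m hk ih =>
    set c := ∏ j ∈ m, ((T.card : R) - j)
    have key : (∏ j ∈ insert k m, interCardSub (R := R) ℱ F j) * subsetInd ℱ T
          - (∏ j ∈ insert k m, ((T.card : R) - j)) • subsetInd ℱ T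
        = interCardSub ℱ F k
            * ((∏ j ∈ m, interCardSub ℱ F j) * subsetInd ℱ T - c • subsetInd ℱ T)
          + c • ∑ i ∈ F \ T, subsetInd ℱ (insert i T) := by
      rw [prod_insert hk, prod_insert hk, mul_sub, mul_smul_comm,
        interCardSub_mul_subsetInd ℱ hTF, mul_assoc]
      module
    rw [key, card_insert_of_notMem hk, ← add_assoc]
    refine add_mem (interCardSub_mul_mem_upperSpan ℱ k ih)
      (Submodule.smul_mem _ _ (sum_mem fun i hi => ?_))
    rw [mem_sdiff] at hi
    exact subsetInd_mem_upperSpan ℱ (ssubset_insert hi.2) (insert_subset hi.1 hTF)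
      (by rw [card_insert_of_notMem hi.2]; omega)

end Expansion

section Independence

variable {α 𝕜 : Type*} [DecidableEq α] [Field 𝕜] [CharZero 𝕜] (ℱ : Finset (Finset α))
  {K : Finset ℕ} {t : ℕ}

theorem subsetInd_mem_shadowSpan (hK : ∀ F ∈ ℱ, F.card ∈ K) (hgap : ∀ k ∈ K, t < k)
    {T : Finset α} (hT : T.card ≤ t + K.card) :
    subsetInd ℱ T ∈ shadowSpan (R := 𝕜) ℱ (t + 1) (t + K.card) := by
  refine strongDownwardInduction (p := fun T => subsetInd ℱ T ∈ shadowSpan ℱ _ _)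
    (fun T ih hT => ?_) T hT
  by_cases hsh : ∃ F ∈ ℱ, T ⊆ F
  swap
  · rw [subsetInd_eq_zero ℱ hsh]; exact zero_mem _
  by_cases ht : t < T.card
  · exact Submodule.subset_span ⟨T, ⟨hsh, ht, hT⟩, rfl⟩
  obtain ⟨F, hF, hTF⟩ := hsh
  set U := ℱ.sup id
  have hTU : T ⊆ U := hTF.trans (le_sup (f := id) hF)
  have hvanish : (∏ k ∈ K, interCardSub (R := 𝕜) ℱ U k) * subsetInd ℱ T = 0 := by
    funext S
    have hSU : S.1 ∩ U = S.1 := inter_eq_left.mpr (le_sup (f := id) S.2)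
    simp only [Pi.mul_apply, Finset.prod_apply, interCardSub, hSU, Pi.zero_apply]
    rw [prod_eq_zero (hK S.1 S.2) (sub_self _), zero_mul]
  have hc : (∏ k ∈ K, ((T.card : 𝕜) - k)) ≠ 0 :=
    prod_ne_zero_iff.mpr fun k hk => sub_ne_zero.mpr (by
      have := hgap k hk
      exact_mod_cast (by omega : T.card ≠ k))
  have h := prod_interCardSub_mul_subsetInd_sub_mem_upperSpan (R := 𝕜) ℱ hTU K
  rw [hvanish, zero_sub, neg_mem_iff, Submodule.smul_mem_iff _ hc] at h
  refine Submodule.span_le.mpr ?_ h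
  rintro _ ⟨T', ⟨hTT', -, hT'⟩, rfl⟩
  exact ih (by omega) hTT'

theorem intersectionPoly_mem_shadowSpan {L : Finset ℕ} (hK : ∀ F ∈ ℱ, F.card ∈ K)
    (hgap : ∀ k ∈ K, t < k) (hL : L.card ≤ t + K.card) (F : Finset α) :
    intersectionPoly ℱ L F ∈ shadowSpan (R := 𝕜) ℱ (t + 1) (t + K.card) := by
  have h := prod_interCardSub_mul_subsetInd_sub_mem_upperSpan (R := 𝕜) ℱ (empty_subset F)
    (L.filter (· < F.card))
  have hle : upperSpan ℱ F ∅ (L.filter (· < F.card)).card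
      ≤ shadowSpan (R := 𝕜) ℱ (t + 1) (t + K.card) := by
    refine Submodule.span_le.mpr ?_
    rintro _ ⟨T, ⟨-, -, hT⟩, rfl⟩
    exact subsetInd_mem_shadowSpan ℱ hK hgap (hT.trans ((card_filter_le _ _).trans hL))
  have hone := subsetInd_mem_shadowSpan (𝕜 := 𝕜) ℱ hK hgap (T := ∅) (by simp)
  rw [subsetInd_empty, card_empty, zero_add, mul_one] at h
  rw [subsetInd_empty] at hone
  exact (Submodule.sub_mem_iff_left _ (Submodule.smul_mem _ _ hone)).mp (hle h)

theorem linearIndependent_intersectionPoly {L : Finset ℕ}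
    (hint : ∀ A ∈ ℱ, ∀ B ∈ ℱ, A ≠ B → (A ∩ B).card ∈ L) :
    LinearIndependent 𝕜 fun F : ℱ => intersectionPoly (R := 𝕜) ℱ L F := by
  refine linearIndependent_of_eval_triangular _ (fun F : ℱ => F.1.card) (fun F => ?_)
    (fun F G hFG hGF => ?_)
  · rw [intersectionPoly_apply, inter_self]
    exact prod_ne_zero_iff.mpr fun l hl =>
      sub_ne_zero.mpr (by exact_mod_cast (mem_filter.mp hl).2.ne')
  · have hne : F.1 ≠ G.1 := fun h => hFG (Subtype.ext h)
    have hlt : (G.1 ∩ F.1).card < F.1.card := by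
      refine card_lt_card ⟨inter_subset_right, fun hsub => hne ?_⟩
      exact eq_of_subset_of_card_le (hsub.trans inter_subset_left) hGF
    rw [intersectionPoly_apply]
    refine prod_eq_zero (mem_filter.mpr ⟨?_, hlt⟩) (sub_self _)
    rw [inter_comm]
    exact hint _ F.2 _ G.2 hne

theorem card_le_finrank_shadowSpan {L : Finset ℕ} (hK : ∀ F ∈ ℱ, F.card ∈ K)
    (hgap : ∀ k ∈ K, t < k) (hL : L.card ≤ t + K.card)
    (hint : ∀ A ∈ ℱ, ∀ B ∈ ℱ, A ≠ B → (A ∩ B).card ∈ L) :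
    ℱ.card ≤ Module.finrank 𝕜 (shadowSpan (R := 𝕜) ℱ (t + 1) (t + K.card)) := by
  have hli : LinearIndependent 𝕜 fun F : ℱ => (⟨intersectionPoly ℱ L F,
      intersectionPoly_mem_shadowSpan ℱ hK hgap hL F⟩ : shadowSpan (R := 𝕜) ℱ _ _) :=
    LinearIndependent.of_comp (Submodule.subtype _) (linearIndependent_intersectionPoly ℱ hint)
  simpa using hli.fintype_card_le_finrank

end Independence

end LIntersecting

theorem coe_biUnion_shadow' (n a b : ℕ) (ℱ : Finset (Finset (Fin n))) :
    (((Icc a b).biUnion fun j => shadow' n j ℱ) : Set (Finset (Fin n)))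
      = {T | (∃ F ∈ ℱ, T ⊆ F) ∧ a ≤ T.card ∧ T.card ≤ b} := by
  ext T
  simp only [Set.mem_ofPred_eq, mem_coe, mem_biUnion, mem_Icc, shadow', mem_filter,
    mem_powersetCard_univ]
  constructor
  · rintro ⟨j, ⟨hlo, hhi⟩, rfl, hsh⟩
    exact ⟨hsh, hlo, hhi⟩
  · rintro ⟨hsh, hlo, hhi⟩
    exact ⟨_, ⟨hlo, hhi⟩, rfl, hsh⟩

open LIntersecting in
theorem stmt7_general (n r s : ℕ) (hrs : r ≤ s)
    (K L : Finset ℕ) (hKcard : K.card = r) (hLcard : L.card = s)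
    (hgap : ∀ k ∈ K, s - r < k)
    (ℱ : Finset (Finset (Fin n)))
    (hℱK : ∀ F ∈ ℱ, F.card ∈ K)
    (hint : ∀ A ∈ ℱ, ∀ B ∈ ℱ, A ≠ B → (A ∩ B).card ∈ L) :
    ℱ.card ≤ ∑ j ∈ Finset.Icc (s - r + 1) s, (shadow' n j ℱ).card := by
  have hrank := card_le_finrank_shadowSpan (𝕜 := ℚ) ℱ hℱK hgap (by omega) hint
  rw [show s - r + K.card = s by omega] at hrank
  calc ℱ.card ≤ Module.finrank ℚ (shadowSpan (R := ℚ) ℱ (s - r + 1) s) := hrank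
    _ ≤ (((Icc (s - r + 1) s).biUnion fun j => shadow' n j ℱ).image (subsetInd ℱ)).card := by
        rw [shadowSpan, ← coe_biUnion_shadow', ← coe_image]
        exact finrank_span_finset_le_card _
    _ ≤ ((Icc (s - r + 1) s).biUnion fun j => shadow' n j ℱ).card := card_image_le
    _ ≤ _ := card_biUnion_le

/-- Shadow form of the multilevel non-shadow ABS theorem:
`|ℱ| ≤ Σ_{j=s−r+1}^{s} |∂_j ℱ|`. -/
theorem stmt7 (n r s : ℕ) (hr : 1 ≤ r) (hrs : r ≤ s)
    (K L : Finset ℕ) (hKcard : K.card = r) (hLcard : L.card = s)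
    (hgap : ∀ k ∈ K, s - r < k)
    (ℱ : Finset (Finset (Fin n)))
    (hℱK : ∀ F ∈ ℱ, F.card ∈ K)
    (hint : ∀ A ∈ ℱ, ∀ B ∈ ℱ, A ≠ B → (A ∩ B).card ∈ L) :
    ℱ.card ≤ ∑ j ∈ Finset.Icc (s - r + 1) s, (shadow' n j ℱ).card :=
  stmt7_general n r s hrs K L hKcard hLcard hgap ℱ hℱK hint
end

section
/- Let p be prime, 1 ≤ s ≤ p−1, L ⊆ 𝔽_p with |L| = s, and K ⊆ 𝔽_p ∖ L. Write P_L(t) = ∏_{ℓ∈L}(t − ℓ) = Σ_{j=0}^s c_j(L)·C(t,j) in 𝔽_p[t], and let bsupp(L) = {j : c_j(L) ≠ 0}. If ℱ ⊆ 2^[n] satisfies |F| mod p ∈ K for every F ∈ ℱ and |E ∩ F| mod p ∈ L for all distinct E, F ∈ ℱ, then |ℱ| ≤ Σ_{j∈bsupp(L)} C(n,j). -/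
open Polynomial

/-- The binomial polynomial `C(t,j) = t(t−1)⋯(t−j+1)/j!` over `ZMod p`. -/
noncomputable def binomPoly (p j : ℕ) : Polynomial (ZMod p) :=
  Polynomial.C ((j.factorial : ZMod p))⁻¹ * descPochhammer (ZMod p) j

/-!
Frankl–Wilson style linear-algebra bound. For `F ∈ ℱ` put `f_F(G) = P_L(|F ∩ G|)`. Since
`f_F(F) ≠ 0` while `f_F(E) = 0` for `E ≠ F` in `ℱ`, these functions are linearly independent.
Expanding `P_L` in the binomial basis and using `C(|F ∩ G|, j) = ∑_{S ⊆ F, |S| = j} [S ⊆ G]`,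
each `f_F` lies in the span of the indicators `G ↦ [S ⊆ G]` with `|S| ∈ bsupp(L)`, a space of
dimension at most `∑_{j ∈ bsupp(L)} C(n, j)`.
-/

section SubsetIndicator

variable {α : Type*} [DecidableEq α] (R : Type*)

def subsetIndicator [Zero R] [One R] (S G : Finset α) : R := if S ⊆ G then 1 else 0

theorem natCast_choose_card_inter_eq_sum_subsetIndicator [AddCommMonoidWithOne R]
    (F G : Finset α) (j : ℕ) :
    ((F ∩ G).card.choose j : R) = ∑ S ∈ F.powersetCard j, subsetIndicator R S G := by
  have hfilter : (F ∩ G).powersetCard j = (F.powersetCard j).filter (· ⊆ G) := by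
    ext S
    simp only [Finset.mem_powersetCard, Finset.mem_filter, Finset.subset_inter_iff]
    tauto
  simp only [subsetIndicator, Finset.sum_boole, ← hfilter, Finset.card_powersetCard]

variable [Fintype α]

def subsetIndicatorFamily [Zero R] [One R] (D : Finset ℕ) :
    (D.biUnion fun j => (Finset.univ : Finset α).powersetCard j) → Finset α → R :=
  fun S => subsetIndicator R S.1

variable {R} [Field R]

theorem finrank_span_subsetIndicatorFamily_le (D : Finset ℕ) :
    Module.finrank R (Submodule.span R (Set.range (subsetIndicatorFamily (α := α) R D))) ≤
      ∑ j ∈ D, (Fintype.card α).choose j := by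
  calc _ ≤ Fintype.card (D.biUnion fun j => (Finset.univ : Finset α).powersetCard j) :=
        finrank_range_le_card _
    _ ≤ ∑ j ∈ D, ((Finset.univ : Finset α).powersetCard j).card := by
        rw [Fintype.card_coe]; exact Finset.card_biUnion_le
    _ = ∑ j ∈ D, (Fintype.card α).choose j := by
        simp only [Finset.card_powersetCard, Finset.card_univ]

theorem natCast_choose_card_inter_mem_span {D : Finset ℕ} {j : ℕ} (hj : j ∈ D) (F : Finset α) :
    (fun G => ((F ∩ G).card.choose j : R)) ∈
      Submodule.span R (Set.range (subsetIndicatorFamily (α := α) R D)) := by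
  have hsum : (fun G => ((F ∩ G).card.choose j : R)) =
      ∑ S ∈ F.powersetCard j, subsetIndicator R S := by
    funext G
    rw [natCast_choose_card_inter_eq_sum_subsetIndicator, Finset.sum_apply]
  rw [hsum]
  refine Submodule.sum_mem _ fun S hS => Submodule.subset_span ⟨⟨S, ?_⟩, rfl⟩
  exact Finset.mem_biUnion.mpr
    ⟨j, hj, Finset.mem_powersetCard.mpr ⟨Finset.subset_univ S, (Finset.mem_powersetCard.mp hS).2⟩⟩

end SubsetIndicator

theorem linearIndependent_of_apply_eq_zero_of_ne {ι β R : Type*} [Field R] {f : ι → β → R}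
    (x : ι → β) (hdiag : ∀ i, f i (x i) ≠ 0) (hoff : ∀ i j, i ≠ j → f i (x j) = 0) :
    LinearIndependent R f := by
  classical
  refine linearIndependent_iff'.mpr fun s g hg i hi => ?_
  have hxi : ∑ k ∈ s, g k * f k (x i) = 0 := by
    simpa only [Finset.sum_apply, Pi.smul_apply, smul_eq_mul, Pi.zero_apply] using congrFun hg (x i)
  rw [Finset.sum_eq_single i (fun k _ hki => by rw [hoff k i hki, mul_zero])
    (fun h => absurd hi h)] at hxi
  exact (mul_eq_zero.mp hxi).resolve_right (hdiag i)

theorem card_le_sum_choose_of_binomial_expansion {α R : Type*} [Fintype α] [DecidableEq α]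
    [Field R] (ℱ : Finset (Finset α)) (q : ℕ → R) (D : Finset ℕ) (a : ℕ → R)
    (hq : ∀ m, q m = ∑ j ∈ D, a j * (m.choose j : R))
    (hdiag : ∀ F ∈ ℱ, q F.card ≠ 0)
    (hoff : ∀ E ∈ ℱ, ∀ F ∈ ℱ, E ≠ F → q (E ∩ F).card = 0) :
    ℱ.card ≤ ∑ j ∈ D, (Fintype.card α).choose j := by
  set V := Submodule.span R (Set.range (subsetIndicatorFamily (α := α) R D))
  let f : ℱ → Finset α → R := fun F G => q (F.1 ∩ G).card
  have hf : LinearIndependent R f :=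
    linearIndependent_of_apply_eq_zero_of_ne (fun F => F.1)
      (fun F => by simpa [f] using hdiag F.1 F.2)
      (fun E F hEF => hoff E.1 E.2 F.1 F.2 (Subtype.coe_ne_coe.mpr hEF))
  have hfV : Submodule.span R (Set.range f) ≤ V := by
    refine Submodule.span_le.mpr (Set.range_subset_iff.mpr fun F => ?_)
    have hexp : f F = ∑ j ∈ D, a j • fun G => ((F.1 ∩ G).card.choose j : R) := by
      funext G
      simp only [f, hq, Finset.sum_apply, Pi.smul_apply, smul_eq_mul]
    rw [hexp]
    exact Submodule.sum_mem _ fun j hj =>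
      Submodule.smul_mem _ _ (natCast_choose_card_inter_mem_span hj F.1)
  calc ℱ.card = Module.finrank R (Submodule.span R (Set.range f)) := by
        rw [finrank_span_eq_card hf, Fintype.card_coe]
    _ ≤ Module.finrank R V := Submodule.finrank_mono hfV
    _ ≤ _ := finrank_span_subsetIndicatorFamily_le D

/-- `j!⁻¹ * j!` is `1` unless `p ∣ j!`, where `binomPoly p j` degenerates to `0`. -/
theorem binomPoly_eval_natCast (p j m : ℕ) :
    (binomPoly p j).eval (m : ZMod p) = ((j.factorial : ZMod p)⁻¹ * j.factorial) * m.choose j := by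
  rw [binomPoly, eval_mul, eval_C, descPochhammer_eval_eq_descFactorial,
    Nat.descFactorial_eq_factorial_mul_choose, Nat.cast_mul, mul_assoc]

theorem eval_prod_X_sub_C_eq_zero_iff {R : Type*} [CommRing R] [IsDomain R] (L : Finset R)
    (x : R) : (∏ ℓ ∈ L, (X - C ℓ)).eval x = 0 ↔ x ∈ L := by
  simp [eval_prod, Finset.prod_eq_zero_iff, sub_eq_zero]

theorem stmt11_general (p n s : ℕ) (hp : p.Prime)
    (L K : Finset (ZMod p)) (hKL : Disjoint K L)
    (c : ℕ → ZMod p)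
    (hc : ∏ ℓ ∈ L, (X - Polynomial.C ℓ) =
      ∑ j ∈ Finset.range (s + 1), c j • binomPoly p j)
    (ℱ : Finset (Finset (Fin n)))
    (hℱK : ∀ F ∈ ℱ, (F.card : ZMod p) ∈ K)
    (hint : ∀ E ∈ ℱ, ∀ F ∈ ℱ, E ≠ F → ((E ∩ F).card : ZMod p) ∈ L) :
    ℱ.card ≤ ∑ j ∈ (Finset.range (s + 1)).filter (fun j => c j ≠ 0), n.choose j := by
  have : Fact p.Prime := ⟨hp⟩
  set P := ∏ ℓ ∈ L, (X - Polynomial.C ℓ)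
  have hexp : ∀ m : ℕ, P.eval (m : ZMod p) =
      ∑ j ∈ (Finset.range (s + 1)).filter (fun j => c j ≠ 0),
        c j * ((j.factorial : ZMod p)⁻¹ * j.factorial) * (m.choose j : ZMod p) := by
    intro m
    rw [Finset.sum_filter_of_ne fun j _ hj => left_ne_zero_of_mul (left_ne_zero_of_mul hj), hc,
      eval_finsetSum]
    simp only [eval_smul, binomPoly_eval_natCast, smul_eq_mul, mul_assoc]
  simpa using card_le_sum_choose_of_binomial_expansion ℱ (fun m => P.eval (m : ZMod p)) _ _ hexp
    (fun F hF h => Finset.disjoint_left.mp hKL (hℱK F hF) ((eval_prod_X_sub_C_eq_zero_iff L _).mp h))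
    (fun E hE F hF hEF => (eval_prod_X_sub_C_eq_zero_iff L _).mpr (hint E hE F hF hEF))

/-- Coefficient-sensitive modular intersection bound:
`|ℱ| ≤ Σ_{j ∈ bsupp(L)} C(n,j)`. -/
theorem stmt11 (p n s : ℕ) (hp : p.Prime) (hs1 : 1 ≤ s) (hs2 : s ≤ p - 1)
    (L K : Finset (ZMod p)) (hLcard : L.card = s) (hKL : Disjoint K L)
    (c : ℕ → ZMod p)
    (hc : ∏ ℓ ∈ L, (X - Polynomial.C ℓ) =
      ∑ j ∈ Finset.range (s + 1), c j • binomPoly p j)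
    (ℱ : Finset (Finset (Fin n)))
    (hℱK : ∀ F ∈ ℱ, (F.card : ZMod p) ∈ K)
    (hint : ∀ E ∈ ℱ, ∀ F ∈ ℱ, E ≠ F → ((E ∩ F).card : ZMod p) ∈ L) :
    ℱ.card ≤ ∑ j ∈ (Finset.range (s + 1)).filter (fun j => c j ≠ 0), n.choose j :=
  stmt11_general p n s hp L K hKL c hc ℱ hℱK hint
end

section
/- Let p be prime, 1 ≤ s ≤ p−1, 0 ≤ m ≤ s−1, R ⊆ {0,…,p−1} of size m disjoint from {0,…,s−m−1}, L = {0,…,s−m−1} ∪ R ⊆ 𝔽_p, and K ⊆ 𝔽_p ∖ L. If ℱ ⊆ 2^[n] satisfies |F| mod p ∈ K for every F ∈ ℱ and |E ∩ F| mod p ∈ L for all distinct E, F ∈ ℱ, then |ℱ| ≤ Σ_{i=0}^m C(n, s−i). -/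
/-!
For `F ∈ ℱ` the set function `f_F(G) = ∏_{l ∈ L} (|G ∩ F| - l)` vanishes at every other member
of `ℱ` but not at `F`, and, since `L ⊇ {0, …, t - 1}`, at every set of size `< t`. Hence the
`f_F` together with the monomials `x_I`, `|I| < t`, are linearly independent in the space of
multilinear polynomials of degree `≤ s`, of dimension `∑_{i ≤ s} C(n, i)`. For `t = s - m` the
monomials use up all but `∑_{i ≤ m} C(n, s - i)` of these dimensions.
-/

open Finset

section LinearIndependence

variable {R X ι κ : Type*} [Ring R]

theorem linearIndependent_of_eval_diag [NoZeroDivisors R] (f : ι → X → R) (x : ι → X)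
    (hdiag : ∀ i, f i (x i) ≠ 0) (hoff : ∀ i j, i ≠ j → f i (x j) = 0) :
    LinearIndependent R f := by
  classical
  rw [linearIndependent_iff']
  intro s g hg j hj
  have hj_eval := congrFun hg (x j)
  simp only [Finset.sum_apply, Pi.smul_apply, smul_eq_mul, Pi.zero_apply] at hj_eval
  rw [sum_eq_single_of_mem j hj fun i _ hij => by rw [hoff i j hij, mul_zero]] at hj_eval
  exact (mul_eq_zero.mp hj_eval).resolve_right (hdiag j)

/-- The restriction map to `S` kills the span of `u` and is injective on the span of `v`. -/
theorem linearIndependent_sum_elim_of_restrict {u : ι → X → R} {v : κ → X → R} (S : Set X)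
    (hu : LinearIndependent R u) (hv : LinearIndependent R fun k => S.domRestrict (v k))
    (hvanish : ∀ i, S.domRestrict (u i) = 0) : LinearIndependent R (Sum.elim u v) := by
  let ρ := LinearMap.funLeft R R ((↑) : S → X)
  have hρv : LinearIndependent R (ρ ∘ v) := hv
  refine hu.sum_type (hρv.of_comp ρ) ?_
  refine (Submodule.range_ker_disjoint hρv).symm.mono_left (Submodule.span_le.mpr ?_)
  rintro _ ⟨i, rfl⟩
  exact hvanish i

end LinearIndependence

namespace SetFunction

variable (R : Type*) [CommRing R] {α : Type*} [DecidableEq α]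

def upsetIndicator (I : Finset α) : Finset α → R := fun G => if I ⊆ G then 1 else 0

variable (α) in
/-- Under `G ↦ (𝟙[x ∈ G])ₓ`, the multilinear polynomials of degree at most `d`;
`upsetIndicator I` is the monomial `∏_{x ∈ I} X_x`. -/
def lowDegree (d : ℕ) : Submodule R (Finset α → R) :=
  Submodule.span R (upsetIndicator R '' {I : Finset α | I.card ≤ d})

variable {R}

theorem upsetIndicator_mul (I J : Finset α) :
    upsetIndicator R I * upsetIndicator R J = upsetIndicator R (I ∪ J) := by
  funext G
  simp only [upsetIndicator, Pi.mul_apply, union_subset_iff, ite_zero_mul_ite_zero, mul_one]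

theorem upsetIndicator_mem_lowDegree {I : Finset α} {d : ℕ} (h : I.card ≤ d) :
    upsetIndicator R I ∈ lowDegree R α d :=
  Submodule.subset_span ⟨I, h, rfl⟩

theorem lowDegree_mono {d e : ℕ} (h : d ≤ e) : lowDegree R α d ≤ lowDegree R α e :=
  Submodule.span_mono <| Set.image_mono fun _ hI => le_trans hI h

theorem one_mem_lowDegree_zero : (1 : Finset α → R) ∈ lowDegree R α 0 := by
  convert upsetIndicator_mem_lowDegree (R := R) (card_empty (α := α)).le
  funext G
  simp [upsetIndicator]

theorem mul_mem_lowDegree {f g : Finset α → R} {d e : ℕ} (hf : f ∈ lowDegree R α d)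
    (hg : g ∈ lowDegree R α e) : f * g ∈ lowDegree R α (d + e) := by
  have hle : lowDegree R α d * lowDegree R α e ≤ lowDegree R α (d + e) := by
    rw [lowDegree, lowDegree, Submodule.span_mul_span]
    refine Submodule.span_le.mpr ?_
    rintro _ ⟨_, ⟨I, hI, rfl⟩, _, ⟨J, hJ, rfl⟩, rfl⟩
    dsimp only
    rw [upsetIndicator_mul]
    exact upsetIndicator_mem_lowDegree ((card_union_le I J).trans (add_le_add hI hJ))
  exact hle (Submodule.mul_mem_mul hf hg)

theorem prod_mem_lowDegree {ι : Type*} (s : Finset ι) (f : ι → Finset α → R) (d : ι → ℕ)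
    (h : ∀ i ∈ s, f i ∈ lowDegree R α (d i)) :
    ∏ i ∈ s, f i ∈ lowDegree R α (∑ i ∈ s, d i) := by
  classical
  induction s using Finset.induction_on with
  | empty => exact one_mem_lowDegree_zero
  | insert i s hi ih =>
    rw [prod_insert hi, sum_insert hi]
    exact mul_mem_lowDegree (h i (mem_insert_self i s))
      (ih fun j hj => h j (mem_insert_of_mem hj))

theorem natCast_card_inter_mem_lowDegree_one (F : Finset α) :
    (fun G => ((G ∩ F).card : R)) ∈ lowDegree R α 1 := by
  have h : (fun G => ((G ∩ F).card : R)) = ∑ x ∈ F, upsetIndicator R {x} := by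
    funext G
    simp only [Finset.sum_apply, upsetIndicator, singleton_subset_iff, sum_boole,
      filter_mem_eq_inter, inter_comm]
  rw [h]
  exact Submodule.sum_mem _ fun x _ => upsetIndicator_mem_lowDegree (card_singleton x).le

theorem finrank_lowDegree_le [StrongRankCondition R] [Fintype α] (d : ℕ) :
    Module.finrank R (lowDegree R α d) ≤ #{I : Finset α | I.card ≤ d} := by
  classical
  have h : upsetIndicator R '' {I : Finset α | I.card ≤ d} =
      ↑((univ.filter fun I : Finset α => I.card ≤ d).image (upsetIndicator R)) := by
    rw [coe_image, coe_filter]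
    simp only [mem_univ, true_and]
  rw [lowDegree, h]
  exact (finrank_span_finset_le_card _).trans card_image_le

/-- Evaluating a vanishing combination at a minimal `I` of its support gives `g I = 0`. -/
theorem linearIndependent_restrict_upsetIndicator (S : Set (Finset α)) :
    LinearIndependent R fun I : S => S.domRestrict (upsetIndicator R I) := by
  classical
  rw [linearIndependent_iff']
  intro s g hg
  by_contra! ⟨I, hI, hgI⟩
  obtain ⟨J, hJ, hmin⟩ := (s.filter (g · ≠ 0)).exists_min_image (fun I => I.1.card)
    ⟨I, mem_filter.mpr ⟨hI, hgI⟩⟩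
  rw [mem_filter] at hJ
  have hJ_eval := congrFun hg J
  simp only [Finset.sum_apply, Pi.smul_apply, Set.domRestrict_apply, smul_eq_mul,
    Pi.zero_apply] at hJ_eval
  rw [sum_eq_single_of_mem J hJ.1 ?_] at hJ_eval
  · simp [upsetIndicator, hJ.2] at hJ_eval
  intro K hK hKJ
  by_cases hgK : g K = 0
  · rw [hgK, zero_mul]
  have hsub : ¬ (K : Finset α) ⊆ J := fun hsub =>
    hKJ (Subtype.ext (eq_of_subset_of_card_le hsub (hmin K (mem_filter.mpr ⟨hK, hgK⟩))))
  simp [upsetIndicator, hsub]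

variable (R)

def intersectionPoly (L : Finset R) (F : Finset α) : Finset α → R :=
  fun G => ∏ l ∈ L, (((G ∩ F).card : R) - l)

variable {R}

theorem intersectionPoly_mem_lowDegree (L : Finset R) (F : Finset α) :
    intersectionPoly R L F ∈ lowDegree R α L.card := by
  have h : intersectionPoly R L F = ∏ l ∈ L, ((fun G => ((G ∩ F).card : R)) - l • 1) := by
    funext G
    simp [intersectionPoly, Finset.prod_apply]
  rw [h, card_eq_sum_ones]
  refine prod_mem_lowDegree L _ _ fun l _ => Submodule.sub_mem _
    (natCast_card_inter_mem_lowDegree_one F) (Submodule.smul_mem _ l ?_)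
  exact lowDegree_mono zero_le_one one_mem_lowDegree_zero

theorem intersectionPoly_eq_zero {L : Finset R} {F G : Finset α}
    (h : ((G ∩ F).card : R) ∈ L) : intersectionPoly R L F G = 0 :=
  prod_eq_zero h (sub_self _)

theorem intersectionPoly_self_ne_zero [IsDomain R] {L : Finset R} {F : Finset α}
    (h : (F.card : R) ∉ L) : intersectionPoly R L F F ≠ 0 := by
  rw [intersectionPoly, inter_self, prod_ne_zero_iff]
  intro l hl hzero
  exact h (sub_eq_zero.mp hzero ▸ hl)

end SetFunction

theorem card_filter_card_lt (α : Type*) [Fintype α] (t : ℕ) :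
    #{I : Finset α | I.card < t} = ∑ i ∈ range t, (Fintype.card α).choose i := by
  classical
  rw [card_eq_sum_card_fiberwise (f := Finset.card) (t := range t)
    fun I hI => mem_range.mpr (mem_filter.mp hI).2]
  refine sum_congr rfl fun i hi => ?_
  have h := card_powersetCard i (univ : Finset α)
  rw [card_univ] at h
  rw [filter_filter, ← h, ← univ_filter_card_eq]
  congr 1
  ext I
  simp only [mem_filter, mem_univ, true_and, and_iff_right_iff_imp]
  rintro rfl
  exact mem_range.mp hi

theorem card_filter_card_le (α : Type*) [Fintype α] (d : ℕ) :
    #{I : Finset α | I.card ≤ d} = ∑ i ∈ range (d + 1), (Fintype.card α).choose i := by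
  simp only [← Nat.lt_succ_iff, card_filter_card_lt]

open SetFunction in
theorem card_add_card_le_of_forall_card_inter_mem {𝕜 α : Type*} [Field 𝕜] [Fintype α]
    [DecidableEq α] (L : Finset 𝕜) (d t : ℕ) (hLd : L.card ≤ d) (htd : t ≤ d + 1)
    (hL : ∀ i < t, (i : 𝕜) ∈ L)
    (ℱ : Finset (Finset α)) (hℱ : ∀ F ∈ ℱ, (F.card : 𝕜) ∉ L)
    (hinter : ∀ E ∈ ℱ, ∀ F ∈ ℱ, E ≠ F → ((E ∩ F).card : 𝕜) ∈ L) :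
    ℱ.card + #{I : Finset α | I.card < t} ≤ #{I : Finset α | I.card ≤ d} := by
  set 𝒯 : Finset (Finset α) := {I | I.card < t}
  set v := Sum.elim (fun F : ℱ => intersectionPoly 𝕜 L F.1) (fun I : 𝒯 => upsetIndicator 𝕜 I.1)
  have hfam : LinearIndependent 𝕜 (fun F : ℱ => intersectionPoly 𝕜 L F.1) :=
    linearIndependent_of_eval_diag _ (fun F => F.1)
      (fun F => intersectionPoly_self_ne_zero (hℱ F.1 F.2))
      (fun E F hEF => intersectionPoly_eq_zero (by
        rw [inter_comm]
        exact hinter E.1 E.2 F.1 F.2 fun h => hEF (Subtype.ext h)))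
  have hv : LinearIndependent 𝕜 v := by
    refine linearIndependent_sum_elim_of_restrict (𝒯 : Set (Finset α)) hfam
      (linearIndependent_restrict_upsetIndicator _) fun F => ?_
    funext G
    refine intersectionPoly_eq_zero (hL _ ?_)
    exact (card_le_card inter_subset_left).trans_lt (mem_filter.mp G.2).2
  have hspan : Submodule.span 𝕜 (Set.range v) ≤ lowDegree 𝕜 α d := by
    refine Submodule.span_le.mpr ?_
    rintro _ ⟨F | I, rfl⟩
    · exact lowDegree_mono hLd (intersectionPoly_mem_lowDegree L F.1)
    · have hI : I.1.card < t := (mem_filter.mp I.2).2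
      exact upsetIndicator_mem_lowDegree (by omega)
  calc ℱ.card + 𝒯.card = Fintype.card (ℱ ⊕ 𝒯) := by
        rw [Fintype.card_sum, Fintype.card_coe, Fintype.card_coe]
    _ = Module.finrank 𝕜 (Submodule.span 𝕜 (Set.range v)) := (finrank_span_eq_card hv).symm
    _ ≤ Module.finrank 𝕜 (lowDegree 𝕜 α d) := Submodule.finrank_mono hspan
    _ ≤ _ := finrank_lowDegree_le _

theorem sum_range_succ_eq_add_sum_range_reflect {M : Type*} [AddCommMonoid M] (f : ℕ → M)
    {m s : ℕ} (h : m ≤ s) :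
    ∑ i ∈ range (s + 1), f i = ∑ i ∈ range (s - m), f i + ∑ i ∈ range (m + 1), f (s - i) := by
  obtain ⟨k, rfl⟩ := Nat.exists_eq_add_of_le h
  rw [show m + k + 1 = k + (m + 1) by omega, sum_range_add, Nat.add_sub_cancel_left]
  congr 1
  rw [← sum_range_reflect]
  refine sum_congr rfl fun i hi => ?_
  rw [mem_range] at hi
  congr 1
  omega

theorem stmt16_general (p n s m : ℕ) (hp : p.Prime)
    (hm : m ≤ s - 1) (R : Finset ℕ) (hRcard : R.card = m)
    (K : Finset (ZMod p))
    (hK : Disjoint K ((Finset.range (s - m) ∪ R).image (Nat.cast : ℕ → ZMod p)))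
    (ℱ : Finset (Finset (Fin n)))
    (hℱK : ∀ F ∈ ℱ, (F.card : ZMod p) ∈ K)
    (hint : ∀ E ∈ ℱ, ∀ F ∈ ℱ, E ≠ F →
      ((E ∩ F).card : ZMod p) ∈
        (Finset.range (s - m) ∪ R).image (Nat.cast : ℕ → ZMod p)) :
    ℱ.card ≤ ∑ i ∈ Finset.range (m + 1), n.choose (s - i) := by
  have := Fact.mk hp
  have hms : m ≤ s := by omega
  have hLcard : ((range (s - m) ∪ R).image (Nat.cast : ℕ → ZMod p)).card ≤ s :=
    card_image_le.trans <| (card_union_le _ _).trans (by rw [card_range, hRcard]; omega)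
  have key := card_add_card_le_of_forall_card_inter_mem _ s (s - m) hLcard (by omega)
    (fun i hi => mem_image_of_mem _ (mem_union_left _ (mem_range.mpr hi))) ℱ
    (fun F hF => disjoint_left.mp hK (hℱK F hF)) hint
  rw [card_filter_card_lt, card_filter_card_le, Fintype.card_fin,
    sum_range_succ_eq_add_sum_range_reflect _ hms] at key
  omega

/-- Almost-initial residue pattern collapse: for `L = {0,…,s−m−1} ∪ R (mod p)`,
any admissible modular family satisfies `|ℱ| ≤ Σ_{i=0}^m C(n, s−i)`. -/
theorem stmt16 (p n s m : ℕ) (hp : p.Prime) (hs1 : 1 ≤ s) (hs2 : s ≤ p - 1)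
    (hm : m ≤ s - 1) (R : Finset ℕ) (hRcard : R.card = m)
    (hRp : ∀ x ∈ R, x < p) (hRdisj : Disjoint R (Finset.range (s - m)))
    (K : Finset (ZMod p))
    (hK : Disjoint K ((Finset.range (s - m) ∪ R).image (Nat.cast : ℕ → ZMod p)))
    (ℱ : Finset (Finset (Fin n)))
    (hℱK : ∀ F ∈ ℱ, (F.card : ZMod p) ∈ K)
    (hint : ∀ E ∈ ℱ, ∀ F ∈ ℱ, E ≠ F →
      ((E ∩ F).card : ZMod p) ∈
        (Finset.range (s - m) ∪ R).image (Nat.cast : ℕ → ZMod p)) :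
    ℱ.card ≤ ∑ i ∈ Finset.range (m + 1), n.choose (s - i) :=
  stmt16_general p n s m hp hm R hRcard K hK ℱ hℱK hint
end

section
/- Let p be prime and 2 ≤ s ≤ p−1. If L = {0,1,…,s−1} ⊆ 𝔽_p and K ⊆ 𝔽_p ∖ L, then every ℱ ⊆ 2^[n] with |F| mod p ∈ K for every F ∈ ℱ and |E ∩ F| mod p ∈ L for all distinct E, F ∈ ℱ satisfies |ℱ| ≤ C(n,s). Moreover, if s ∈ K and n ≥ s, the family of all s-subsets of [n] attains this bound. -/
/-!
Attach to every set `E ⊆ [n]` its inclusion vector `v_E ∈ 𝔽_p^{([n] choose s)}`, with `v_E(S) = 1`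
iff `S ⊆ E`. Then `v_E ⬝ v_F = C(|E ∩ F|, s)`, and since `s < p`, Lucas' theorem shows that this
residue only depends on `|E ∩ F| mod p`: it vanishes when the residue lies in `{0, …, s-1}` and is
nonzero otherwise (the residue is then some `r` with `s ≤ r < p`, and `p ∤ C(r, s)`). So the
vectors of an admissible family are pairwise orthogonal but not isotropic, hence linearly
independent in a space of dimension `C(n, s)`.
-/

open Finset

section Binomial

variable {p : ℕ} [Fact p.Prime]

theorem Nat.cast_choose_eq_cast_choose_mod {k : ℕ} (hk : k < p) (m : ℕ) :
    (m.choose k : ZMod p) = ((m % p).choose k : ZMod p) := by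
  rw [ZMod.natCast_eq_natCast_iff]
  simpa [Nat.mod_eq_of_lt hk, Nat.div_eq_of_lt hk] using
    Choose.choose_modEq_choose_mod_mul_choose_div_nat (p := p) (n := m) (k := k)

theorem Nat.cast_choose_eq_zero_of_mod_lt {k m : ℕ} (hk : k < p) (h : m % p < k) :
    (m.choose k : ZMod p) = 0 := by
  rw [Nat.cast_choose_eq_cast_choose_mod hk, Nat.choose_eq_zero_of_lt h, Nat.cast_zero]

theorem Nat.cast_choose_ne_zero_of_le_mod {k m : ℕ} (h : k ≤ m % p) :
    (m.choose k : ZMod p) ≠ 0 := by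
  have hp := (Fact.out : p.Prime)
  have hmod : m % p < p := Nat.mod_lt _ hp.pos
  rw [Nat.cast_choose_eq_cast_choose_mod (h.trans_lt hmod), Ne, ZMod.natCast_eq_zero_iff]
  intro hdvd
  have : p ∣ (m % p).factorial := by
    rw [← Nat.choose_mul_factorial_mul_factorial h, mul_assoc]
    exact hdvd.mul_right _
  exact absurd (hp.dvd_factorial.mp this) (by omega)

end Binomial

theorem ZMod.natCast_mem_image_range_iff {p s : ℕ} [NeZero p] (hs : s ≤ p) (m : ℕ) :
    (m : ZMod p) ∈ (range s).image (Nat.cast : ℕ → ZMod p) ↔ m % p < s := by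
  simp only [mem_image, mem_range]
  constructor
  · rintro ⟨l, hl, hlm⟩
    rw [ZMod.natCast_eq_natCast_iff', Nat.mod_eq_of_lt (hl.trans_le hs)] at hlm
    exact hlm ▸ hl
  · intro h
    exact ⟨m % p, h, ZMod.natCast_mod m p⟩

theorem Finset.card_inter_lt_of_card_eq {α : Type*} [DecidableEq α] {s : ℕ} {E F : Finset α}
    (hE : E.card = s) (hF : F.card = s) (hEF : E ≠ F) : (E ∩ F).card < s := by
  refine hE ▸ card_lt_card (inter_subset_left.ssubset_of_ne fun h => hEF ?_)
  exact eq_of_subset_of_card_le (h ▸ inter_subset_right) (hE.trans hF.symm).ge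

section InclusionVectors

variable {α : Type*} [Fintype α] [DecidableEq α]

def inclusionVector (R : Type*) [Zero R] [One R] (s : ℕ) (E : Finset α) :
    (powersetCard s (univ : Finset α)) → R :=
  fun S => if (S : Finset α) ⊆ E then 1 else 0

theorem inclusionVector_dotProduct {R : Type*} [Semiring R] (s : ℕ) (E F : Finset α) :
    inclusionVector R s E ⬝ᵥ inclusionVector R s F = ((E ∩ F).card.choose s : R) := by
  have hfilter :
      (powersetCard s (univ : Finset α)).filter (· ⊆ E ∩ F) = powersetCard s (E ∩ F) := by
    ext S
    simp [and_comm]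
  simp only [dotProduct, inclusionVector, ite_zero_mul_ite_zero, mul_one, ← subset_inter_iff]
  rw [sum_coe_sort (powersetCard s univ) (fun S => if S ⊆ E ∩ F then (1 : R) else 0), sum_boole,
    hfilter, card_powersetCard]

theorem card_le_choose_of_cast_choose_card_inter {K : Type*} [Field K] {s : ℕ}
    (ℱ : Finset (Finset α))
    (hoff : ∀ E ∈ ℱ, ∀ F ∈ ℱ, E ≠ F → ((E ∩ F).card.choose s : K) = 0)
    (hdiag : ∀ F ∈ ℱ, (F.card.choose s : K) ≠ 0) :
    ℱ.card ≤ (Fintype.card α).choose s := by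
  have hli : LinearIndependent K (fun E : ℱ => inclusionVector K s (E : Finset α)) := by
    refine LinearMap.linearIndependent_of_isOrthoᵢ (B := dotProductBilin K K) ?_ ?_
    · intro E F hEF
      simpa [Function.onFun, inclusionVector_dotProduct] using
        hoff E E.2 F F.2 (Subtype.coe_injective.ne hEF)
    · intro F
      simpa [inclusionVector_dotProduct] using hdiag F F.2
  simpa [Module.finrank_pi, card_powersetCard] using hli.fintype_card_le_finrank

end InclusionVectors

theorem stmt17_general (p n s : ℕ) (hp : p.Prime) (hs2 : s ≤ p - 1)
    (K : Finset (ZMod p))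
    (hK : Disjoint K ((Finset.range s).image (Nat.cast : ℕ → ZMod p))) :
    (∀ ℱ : Finset (Finset (Fin n)),
        (∀ F ∈ ℱ, (F.card : ZMod p) ∈ K) →
        (∀ E ∈ ℱ, ∀ F ∈ ℱ, E ≠ F →
          ((E ∩ F).card : ZMod p) ∈ (Finset.range s).image (Nat.cast : ℕ → ZMod p)) →
        ℱ.card ≤ n.choose s) ∧
    ((s : ZMod p) ∈ K → s ≤ n →
      (∀ F ∈ Finset.powersetCard s (Finset.univ : Finset (Fin n)),
        (F.card : ZMod p) ∈ K) ∧
      (∀ E ∈ Finset.powersetCard s (Finset.univ : Finset (Fin n)),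
        ∀ F ∈ Finset.powersetCard s (Finset.univ : Finset (Fin n)), E ≠ F →
          ((E ∩ F).card : ZMod p) ∈ (Finset.range s).image (Nat.cast : ℕ → ZMod p)) ∧
      (Finset.powersetCard s (Finset.univ : Finset (Fin n))).card = n.choose s) := by
  have : Fact p.Prime := ⟨hp⟩
  have hsp : s < p := by have := hp.two_le; omega
  have hL (m : ℕ) := ZMod.natCast_mem_image_range_iff hsp.le m
  refine ⟨fun ℱ hcard hinter => ?_, fun hsK _ => ⟨?_, ?_, ?_⟩⟩
  · simpa using card_le_choose_of_cast_choose_card_inter (K := ZMod p) (s := s) ℱ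
      (fun E hE F hF hEF =>
        Nat.cast_choose_eq_zero_of_mod_lt hsp ((hL _).mp (hinter E hE F hF hEF)))
      (fun F hF => Nat.cast_choose_ne_zero_of_le_mod
        (not_lt.mp fun h => disjoint_left.mp hK (hcard F hF) ((hL _).mpr h)))
  · intro F hF
    rwa [(mem_powersetCard.mp hF).2]
  · intro E hE F hF hEF
    exact mem_image_of_mem _ (mem_range.mpr
      (card_inter_lt_of_card_eq (mem_powersetCard.mp hE).2 (mem_powersetCard.mp hF).2 hEF))
  · rw [card_powersetCard, card_univ, Fintype.card_fin]

/-- Consecutive-residue collapse: for `L = {0,…,s−1} (mod p)` every admissible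
modular family has size at most `C(n,s)`, and if `s ∈ K` and `n ≥ s` the family of
all `s`-subsets of `[n]` is admissible and attains this bound. -/
theorem stmt17 (p n s : ℕ) (hp : p.Prime) (hs1 : 2 ≤ s) (hs2 : s ≤ p - 1)
    (K : Finset (ZMod p))
    (hK : Disjoint K ((Finset.range s).image (Nat.cast : ℕ → ZMod p))) :
    (∀ ℱ : Finset (Finset (Fin n)),
        (∀ F ∈ ℱ, (F.card : ZMod p) ∈ K) →
        (∀ E ∈ ℱ, ∀ F ∈ ℱ, E ≠ F →
          ((E ∩ F).card : ZMod p) ∈ (Finset.range s).image (Nat.cast : ℕ → ZMod p)) →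
        ℱ.card ≤ n.choose s) ∧
    ((s : ZMod p) ∈ K → s ≤ n →
      (∀ F ∈ Finset.powersetCard s (Finset.univ : Finset (Fin n)),
        (F.card : ZMod p) ∈ K) ∧
      (∀ E ∈ Finset.powersetCard s (Finset.univ : Finset (Fin n)),
        ∀ F ∈ Finset.powersetCard s (Finset.univ : Finset (Fin n)), E ≠ F →
          ((E ∩ F).card : ZMod p) ∈ (Finset.range s).image (Nat.cast : ℕ → ZMod p)) ∧
      (Finset.powersetCard s (Finset.univ : Finset (Fin n))).card = n.choose s) :=
  stmt17_general p n s hp hs2 K hK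
end
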